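/- Let p, q be orthogonal projections on a complex Hilbert space H. If p and q are in general position (p ∧ q = 0, (p ∨ q − p) ∧ q = 0, (p ∨ q − q) ∧ p = 0), then the closure of p(q(H)) equals p(H) restricted to the range of p ∨ q; in particular the closure of the image pqH equals the range of p when p ≤ p ∨ q. -/

import Mathlib

open LinearMap Filter Topology ENNReal

section Preamble

variable {H : Type} [NormedAddCommGroup H] [InnerProductSpace ℂ H] [CompleteSpace H]

/-- An orthogonal projection: a self-adjoint idempotent bounded operator. -/
def IsProjOp (p : H →L[ℂ] H) : Prop := IsIdempotentElem p ∧ IsSelfAdjoint p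

/-- The orthogonal projection onto the closure of a submodule. -/
noncomputable def sProj (K : Submodule ℂ H) : H →L[ℂ] H :=
  haveI : CompleteSpace K.topologicalClosure :=
    K.isClosed_topologicalClosure.completeSpace_coe
  K.topologicalClosure.subtypeL.comp (K.topologicalClosure.orthogonalProjectionOnto)

/-- `p ∨ q`: projection onto the closed span of the ranges. -/
noncomputable def pSup (p q : H →L[ℂ] H) : H →L[ℂ] H :=
  sProj (LinearMap.range (p : H →ₗ[ℂ] H) ⊔ LinearMap.range (q : H →ₗ[ℂ] H))

/-- `p ∧ q`: projection onto the intersection of the ranges. -/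
noncomputable def pInf (p q : H →L[ℂ] H) : H →L[ℂ] H :=
  sProj (LinearMap.range (p : H →ₗ[ℂ] H) ⊓ LinearMap.range (q : H →ₗ[ℂ] H))

/-- Supremum of a family of projections. -/
noncomputable def pSupFam {ι : Type} (q : ι → H →L[ℂ] H) : H →L[ℂ] H :=
  sProj (⨆ i, LinearMap.range ((q i) : H →ₗ[ℂ] H))

/-- Order on projections via ranges. -/
def pLe (p q : H →L[ℂ] H) : Prop := LinearMap.range (p : H →ₗ[ℂ] H) ≤ LinearMap.range (q : H →ₗ[ℂ] H)

/-- `r n ↗ rl`: increasing sequence of projections with supremum `rl`. -/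
def AscendsTo (r : ℕ → H →L[ℂ] H) (rl : H →L[ℂ] H) : Prop :=
  (∀ n, pLe (r n) (r (n + 1))) ∧ (∀ n, pLe (r n) rl) ∧
    (⨆ n, LinearMap.range ((r n) : H →ₗ[ℂ] H)).topologicalClosure = LinearMap.range (rl : H →ₗ[ℂ] H)

/-- The set of orthogonal projections belonging to a von Neumann algebra. -/
def projSet (A : VonNeumannAlgebra H) : Set (H →L[ℂ] H) :=
  {p | p ∈ A ∧ IsProjOp p}

/-- An ideal of projections inside the projection lattice of `A`. -/
structure IsIdealOfProj (A : VonNeumannAlgebra H) (M : Set (H →L[ℂ] H)) : Prop where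
  subset : M ⊆ projSet A
  downward : ∀ p q, p ∈ projSet A → q ∈ M → pLe p q → p ∈ M
  supClosed : ∀ p ∈ M, ∀ q ∈ M, ‖p * q‖ < 1 → pSup p q ∈ M
  total : (⨆ p ∈ M, LinearMap.range (p : H →ₗ[ℂ] H)).topologicalClosure = ⊤

/-- Murray–von Neumann equivalence of projections in `A`. -/
def MvNEquiv (A : VonNeumannAlgebra H) (p q : H →L[ℂ] H) : Prop :=
  ∃ u, u ∈ A ∧ star u * u = p ∧ u * star u = q

/-- A projection `p` of `A` is finite. -/
def IsFiniteProjIn (A : VonNeumannAlgebra H) (p : H →L[ℂ] H) : Prop :=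
  ∀ q, q ∈ projSet A → pLe q p → MvNEquiv A p q → q = p

/-- `A` is a finite von Neumann algebra. -/
def IsFiniteVN (A : VonNeumannAlgebra H) : Prop := IsFiniteProjIn A 1

/-- `A` is a semifinite von Neumann algebra. -/
def IsSemifiniteVN (A : VonNeumannAlgebra H) : Prop :=
  ∀ p ∈ projSet A, p ≠ 0 → ∃ q ∈ projSet A, q ≠ 0 ∧ pLe q p ∧ IsFiniteProjIn A q

/-- An abelian projection of `A`. -/
def IsAbelianProjIn (A : VonNeumannAlgebra H) (e : H →L[ℂ] H) : Prop :=
  e ∈ projSet A ∧ ∀ a ∈ A, ∀ b ∈ A, (e * a * e) * (e * b * e) = (e * b * e) * (e * a * e)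

/-- `A` has a direct summand of type I₂. -/
def HasTypeI2Summand (A : VonNeumannAlgebra H) : Prop :=
  ∃ z e₁ e₂ : H →L[ℂ] H, z ∈ projSet A ∧ z ≠ 0 ∧ (∀ a ∈ A, z * a = a * z) ∧
    IsAbelianProjIn A e₁ ∧ IsAbelianProjIn A e₂ ∧ e₁ * e₂ = 0 ∧ e₁ + e₂ = z ∧
    MvNEquiv A e₁ e₂

/-- `μ` is a (completely additive) measure on a set `P` of projections. -/
def IsMeasureOn (P : Set (H →L[ℂ] H)) (μ : (H →L[ℂ] H) → ℝ≥0∞) : Prop :=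
  ∀ (ι : Type) (e : ι → H →L[ℂ] H) (f : H →L[ℂ] H),
    (∀ i, e i ∈ P) → f ∈ P → (Pairwise fun i j => e i * e j = 0) →
    f = pSupFam e → μ f = ∑' i, μ (e i)

/-- `μ` is a σ-finite measure on the projections of `A`. -/
def IsSigmaFinite (A : VonNeumannAlgebra H) (μ : (H →L[ℂ] H) → ℝ≥0∞) : Prop :=
  ∃ p : ℕ → H →L[ℂ] H, (∀ n, p n ∈ projSet A) ∧ AscendsTo p 1 ∧ ∀ n, μ (p n) < ⊤

/-- `p` is a projection of finite `μ`-measure relative to the family `M`. -/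
def FinMeasProjOn (M : Set (H →L[ℂ] H)) (μ : (H →L[ℂ] H) → ℝ≥0∞)
    (p : H →L[ℂ] H) : Prop :=
  (⨆ q ∈ {q | q ∈ M ∧ pLe q p ∧ μ q < ⊤}, LinearMap.range (q : H →ₗ[ℂ] H)).topologicalClosure
      = LinearMap.range (p : H →ₗ[ℂ] H) ∧
    (⨆ q ∈ {q | q ∈ M ∧ pLe q p ∧ μ q < ⊤}, μ q) < ⊤

/-- A faithful normal finite trace on `A` (the properties of it that we use). -/
structure IsFNFiniteTrace (A : VonNeumannAlgebra H) (τ : (H →L[ℂ] H) → ℝ) : Prop where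
  add : ∀ a b, τ (a + b) = τ a + τ b
  tracial : ∀ a b, τ (a * b) = τ (b * a)
  nonneg : ∀ a, 0 ≤ τ (star a * a)
  faithful : ∀ p, p ∈ projSet A → τ p = 0 → p = 0
  normal : ∀ (r : ℕ → H →L[ℂ] H) (rl : H →L[ℂ] H), (∀ n, r n ∈ projSet A) →
    rl ∈ projSet A → AscendsTo r rl →
    Tendsto (fun n => τ (r n)) atTop (nhds (τ rl))

end Preamble

/-! If `y ∈ range p` is orthogonal to `pqH`, then `0 = (pq)* y = q p y = q y`, so `y` lies in
`range p ∩ ker q`. On such vectors `p ∨ q` acts as the identity and `q` as zero, hence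
`range p ∩ ker q ⊆ range (p ∨ q - q) ∩ range p`, which is trivial by the third general position
condition. So `pqH` has no nonzero orthogonal complement inside the closed subspace `pH`. -/

theorem Submodule.topologicalClosure_eq_of_orthogonal_inf_eq_bot {𝕜 E : Type*} [RCLike 𝕜]
    [NormedAddCommGroup E] [InnerProductSpace 𝕜 E] [CompleteSpace E] {K M : Submodule 𝕜 E}
    (hKM : K ≤ M) (hM : IsClosed (M : Set E)) (h : Kᗮ ⊓ M = ⊥) :
    K.topologicalClosure = M := by
  have hle : K.topologicalClosure ≤ M := K.topologicalClosure_minimal hKM hM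
  simpa only [Submodule.orthogonal_closure, h, sup_bot_eq] using
    Submodule.sup_orthogonal_inf_of_hasOrthogonalProjection hle

section Projections

variable {H : Type} [NormedAddCommGroup H] [InnerProductSpace ℂ H] [CompleteSpace H]

lemma sProj_apply_of_mem (K : Submodule ℂ H) {x : H} (hx : x ∈ K) : sProj K x = x :=
  K.topologicalClosure.starProjection_eq_self_iff.mpr (K.le_topologicalClosure hx)

lemma eq_bot_of_sProj_eq_zero {K : Submodule ℂ H} (h : sProj K = 0) : K = ⊥ :=
  eq_bot_iff.mpr fun x hx ↦ by simpa [h] using (sProj_apply_of_mem K hx).symm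

lemma pSup_apply_of_mem_range_left {p q : H →L[ℂ] H} {x : H}
    (hx : x ∈ LinearMap.range (p : H →ₗ[ℂ] H)) : pSup p q x = x :=
  sProj_apply_of_mem _ (Submodule.mem_sup_left hx)

lemma IsProjOp.isClosed_range {p : H →L[ℂ] H} (hp : IsProjOp p) :
    IsClosed (LinearMap.range (p : H →ₗ[ℂ] H) : Set H) :=
  ContinuousLinearMap.IsIdempotentElem.isClosed_range hp.1

lemma IsProjOp.orthogonal_range_mul_inf_range_le_ker {p q : H →L[ℂ] H} (hp : IsProjOp p)
    (hq : IsSelfAdjoint q) :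
    (LinearMap.range ((p * q : H →L[ℂ] H) : H →ₗ[ℂ] H))ᗮ ⊓ LinearMap.range (p : H →ₗ[ℂ] H) ≤
      LinearMap.ker (q : H →ₗ[ℂ] H) := by
  rintro y ⟨hperp, hy⟩
  have hqp : q (p y) = 0 := by
    have := (ContinuousLinearMap.orthogonal_range (p * q)).le hperp
    rwa [LinearMap.mem_ker, ← ContinuousLinearMap.star_eq_adjoint, star_mul, hp.2.star_eq,
      hq.star_eq] at this
  have hpy : p y = y := (ContinuousLinearMap.IsIdempotentElem.toLinearMap hp.1).mem_range_iff.mp hy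
  rwa [hpy] at hqp

lemma range_inf_ker_le_range_pSup_sub {p q : H →L[ℂ] H} :
    LinearMap.range (p : H →ₗ[ℂ] H) ⊓ LinearMap.ker (q : H →ₗ[ℂ] H) ≤
      LinearMap.range ((pSup p q - q : H →L[ℂ] H) : H →ₗ[ℂ] H) := by
  rintro y ⟨hy, hqy⟩
  exact ⟨y, by simp [pSup_apply_of_mem_range_left hy, LinearMap.mem_ker.mp hqy]⟩

end Projections

theorem stmt1_general {H : Type} [NormedAddCommGroup H] [InnerProductSpace ℂ H] [CompleteSpace H]
    (p q : H →L[ℂ] H) (hp : IsProjOp p) (hq : IsProjOp q)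
    (hg3 : pInf (pSup p q - q) p = 0) :
    (LinearMap.range ((p * q : H →L[ℂ] H) : H →ₗ[ℂ] H)).topologicalClosure = LinearMap.range (p : H →ₗ[ℂ] H) := by
  refine Submodule.topologicalClosure_eq_of_orthogonal_inf_eq_bot
    (LinearMap.range_comp_le_range _ _) hp.isClosed_range (eq_bot_iff.mpr fun y hy ↦ ?_)
  have hqy := hp.orthogonal_range_mul_inf_range_le_ker hq.2 hy
  have hbot := eq_bot_of_sProj_eq_zero hg3
  exact hbot.le ⟨range_inf_ker_le_range_pSup_sub ⟨hy.2, hqy⟩, hy.2⟩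

/-- in general position, the closure of `pqH` equals the range of `p`. -/
theorem stmt1 {H : Type} [NormedAddCommGroup H] [InnerProductSpace ℂ H] [CompleteSpace H]
    (p q : H →L[ℂ] H) (hp : IsProjOp p) (hq : IsProjOp q)
    (hg1 : pInf p q = 0) (hg2 : pInf (pSup p q - p) q = 0)
    (hg3 : pInf (pSup p q - q) p = 0) :
    (LinearMap.range ((p * q : H →L[ℂ] H) : H →ₗ[ℂ] H)).topologicalClosure = LinearMap.range (p : H →ₗ[ℂ] H) :=
  stmt1_general p q hp hq hg3
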